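/- The Schur complement of a connected graph Laplacian onto a nonempty vertex subset T is itself a graph Laplacian: it is symmetric, has zero row sums, and has nonpositive off-diagonal entries. -/

import Mathlib

open Matrix Finset

/-- The Laplacian of the weighted graph with weights `w`. -/
def lapOf {V : Type*} [Fintype V] [DecidableEq V] (w : V → V → ℝ) : Matrix V V ℝ :=
  Matrix.of fun u v => if u = v then ∑ x, w u x else -(w u v)

/-- The Schur complement of `L` onto the vertex set `T`:
`L_TT − L_TF L_FF⁻¹ L_FT`, where `F = V ∖ T`. -/
noncomputable def schurOnto {V : Type*} [Fintype V] [DecidableEq V]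
    (L : Matrix V V ℝ) (T : Set V) [DecidablePred (· ∈ T)] :
    Matrix {a // a ∈ T} {a // a ∈ T} ℝ :=
  L.toBlock (· ∈ T) (· ∈ T) -
    L.toBlock (· ∈ T) (¬ · ∈ T) * (L.toBlock (¬ · ∈ T) (¬ · ∈ T))⁻¹ *
      L.toBlock (¬ · ∈ T) (· ∈ T)

/-!
Write `L` in blocks along `V = T ⊔ F`. Symmetry of `L` passes to `L_TT − L_TF L_FF⁻¹ L_FT`
directly. If `L x = 0`, the `F`-rows give `x_F = −L_FF⁻¹ L_FT x_T`, and substituting into the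
`T`-rows gives `SC x_T = 0`; for `x = 1` these are the zero row sums. Off the diagonal, `L_TT`,
`L_TF` and `L_FT` are entrywise nonpositive, so `SC` is too as soon as `L_FF⁻¹ ≥ 0` entrywise.
That holds by the minimum principle: the `l`-th column of `L_FF⁻¹`, extended by zero to `T`, is
superharmonic off `T`, and on a connected graph a negative minimum of such a function would
spread to all of `V`, including `T`.
-/

lemma mulVec_apply_eq_toBlock_mulVec_add {m n R : Type*} [Fintype n] [CommRing R]
    (M : Matrix m n R) (p : m → Prop) (q : n → Prop) [DecidablePred q] (x : n → R)
    (i : {a // p a}) :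
    (M *ᵥ x) i = (M.toBlock p q *ᵥ fun j => x j) i + (M.toBlock p (¬ q ·) *ᵥ fun j => x j) i := by
  simp only [mulVec, dotProduct, toBlock_apply]
  exact (Fintype.sum_subtype_add_sum_subtype q _).symm

section BlockAlgebra

variable {V : Type*} [Fintype V] [DecidableEq V]

lemma schurOnto_transpose {L : Matrix V V ℝ} (hL : L.IsSymm) (T : Set V) [DecidablePred (· ∈ T)] :
    (schurOnto L T)ᵀ = schurOnto L T := by
  have hblock : ∀ (p q : V → Prop) [DecidablePred p] [DecidablePred q],
      (L.toBlock p q)ᵀ = L.toBlock q p := fun p q _ _ => by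
    ext i j; exact congrFun (congrFun hL i) j
  simp only [schurOnto, transpose_sub, transpose_mul, transpose_nonsing_inv, hblock,
    Matrix.mul_assoc]

lemma schurOnto_mulVec_eq_zero {L : Matrix V V ℝ} {T : Set V} [DecidablePred (· ∈ T)]
    (hFF : IsUnit (L.toBlock (¬ · ∈ T) (¬ · ∈ T))) {x : V → ℝ} (hx : L *ᵥ x = 0) :
    schurOnto L T *ᵥ (fun i => x i) = 0 := by
  set xT : {a // a ∈ T} → ℝ := fun i => x i
  set xF : {a // ¬ a ∈ T} → ℝ := fun i => x i
  have hrowT : L.toBlock (· ∈ T) (· ∈ T) *ᵥ xT + L.toBlock (· ∈ T) (¬ · ∈ T) *ᵥ xF = 0 := by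
    ext i; simpa [hx] using (mulVec_apply_eq_toBlock_mulVec_add L _ (· ∈ T) x i).symm
  have hrowF : L.toBlock (¬ · ∈ T) (· ∈ T) *ᵥ xT + L.toBlock (¬ · ∈ T) (¬ · ∈ T) *ᵥ xF = 0 := by
    ext i; simpa [hx] using (mulVec_apply_eq_toBlock_mulVec_add L _ (· ∈ T) x i).symm
  have hxF : (L.toBlock (¬ · ∈ T) (¬ · ∈ T))⁻¹ *ᵥ L.toBlock (¬ · ∈ T) (· ∈ T) *ᵥ xT = -xF := by
    rw [eq_neg_of_add_eq_zero_left hrowF, mulVec_neg, mulVec_mulVec,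
      nonsing_inv_mul _ ((isUnit_iff_isUnit_det _).mp hFF), one_mulVec]
  rw [schurOnto, sub_mulVec, ← mulVec_mulVec, ← mulVec_mulVec, hxF, mulVec_neg, sub_neg_eq_add,
    hrowT]

lemma schurOnto_apply_nonpos_of_ne {L : Matrix V V ℝ} {T : Set V} [DecidablePred (· ∈ T)]
    (hL : ∀ u v, u ≠ v → L u v ≤ 0)
    (hinv : ∀ k l, 0 ≤ (L.toBlock (¬ · ∈ T) (¬ · ∈ T))⁻¹ k l) {i j : {a // a ∈ T}} (hij : i ≠ j) :
    schurOnto L T i j ≤ 0 := by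
  have hTF : ∀ (t : {a // a ∈ T}) (f : {a // ¬ a ∈ T}), (t : V) ≠ f :=
    fun t f h => f.2 (h ▸ t.2)
  have hcorr : 0 ≤ (L.toBlock (· ∈ T) (¬ · ∈ T) * (L.toBlock (¬ · ∈ T) (¬ · ∈ T))⁻¹ *
      L.toBlock (¬ · ∈ T) (· ∈ T)) i j := by
    simp only [mul_apply, Finset.sum_mul]
    refine Finset.sum_nonneg fun l _ => Finset.sum_nonneg fun k _ => ?_
    exact mul_nonneg_of_nonpos_of_nonpos
      (mul_nonpos_of_nonpos_of_nonneg (hL _ _ (hTF i k)) (hinv k l))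
      (hL _ _ (hTF j l).symm)
  have hdiag : L i j ≤ 0 := hL _ _ (fun h => hij (Subtype.ext h))
  simp only [schurOnto, Matrix.sub_apply, toBlock_apply] at hdiag ⊢
  linarith

end BlockAlgebra

section Laplacian

variable {V : Type*} [Fintype V] [DecidableEq V] {w : V → V → ℝ}

lemma lapOf_isSymm (hw_sym : ∀ u v, w u v = w v u) : (lapOf w).IsSymm := by
  refine IsSymm.ext_iff.mpr fun u v => ?_
  by_cases h : u = v
  · subst h; rfl
  · simp only [lapOf, of_apply, if_neg h, if_neg (Ne.symm h), hw_sym]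

lemma lapOf_apply_nonpos_of_ne (hw_nonneg : ∀ u v, 0 ≤ w u v) {u v : V} (h : u ≠ v) :
    lapOf w u v ≤ 0 := by
  simpa [lapOf, h] using hw_nonneg u v

lemma lapOf_eq_diagonal_sub (hw_diag : ∀ u, w u u = 0) :
    lapOf w = diagonal (fun u => ∑ v, w u v) - of w := by
  ext u v
  by_cases h : u = v
  · subst h; simp [lapOf, hw_diag]
  · simp [lapOf, h]

lemma lapOf_mulVec_apply (hw_diag : ∀ u, w u u = 0) (x : V → ℝ) (i : V) :
    (lapOf w *ᵥ x) i = ∑ v, w i v * (x i - x v) := by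
  simp only [lapOf_eq_diagonal_sub hw_diag, sub_mulVec, Pi.sub_apply, mulVec_diagonal, mul_sub,
    sum_sub_distrib, sum_mul]
  rfl

lemma lapOf_mulVec_one (hw_diag : ∀ u, w u u = 0) : lapOf w *ᵥ (fun _ => 1) = 0 := by
  ext i; simp [lapOf_mulVec_apply hw_diag]

lemma lapOf_mulVec_indicator_eq_zero (hw_sym : ∀ u v, w u v = w v u) (hw_diag : ∀ u, w u u = 0)
    {S : Set V} (hS : ∀ a ∈ S, ∀ v, w a v ≠ 0 → v ∈ S) : lapOf w *ᵥ S.indicator 1 = 0 := by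
  ext a
  rw [lapOf_mulVec_apply hw_diag, Pi.zero_apply]
  refine Finset.sum_eq_zero fun v _ => ?_
  by_cases hav : w a v = 0
  · rw [hav, zero_mul]
  have hiff : a ∈ S ↔ v ∈ S :=
    ⟨fun ha => hS a ha v hav, fun hv => hS v hv a (hw_sym a v ▸ hav)⟩
  by_cases ha : a ∈ S
  · simp [ha, hiff.mp ha]
  · simp [ha, mt hiff.mpr ha]

lemma eq_of_isMin_of_lapOf_mulVec_nonneg (hw_nonneg : ∀ u v, 0 ≤ w u v)
    (hw_diag : ∀ u, w u u = 0) {x : V → ℝ} {a : V} (hmin : ∀ u, x a ≤ x u)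
    (ha : 0 ≤ (lapOf w *ᵥ x) a) {v : V} (hv : w a v ≠ 0) : x v = x a := by
  rw [lapOf_mulVec_apply hw_diag] at ha
  have hterm : ∀ u ∈ univ, w a u * (x a - x u) ≤ 0 := fun u _ =>
    mul_nonpos_of_nonneg_of_nonpos (hw_nonneg a u) (sub_nonpos.mpr (hmin u))
  have hzero := (sum_eq_zero_iff_of_nonpos hterm).mp (le_antisymm (sum_nonpos hterm) ha) v
    (mem_univ v)
  linarith [(mul_eq_zero.mp hzero).resolve_left hv]

/-- The discrete minimum principle. -/
lemma nonneg_of_lapOf_mulVec_nonneg (hw_sym : ∀ u v, w u v = w v u)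
    (hw_nonneg : ∀ u v, 0 ≤ w u v) (hw_diag : ∀ u, w u u = 0)
    (hconn : ∀ x : V → ℝ, lapOf w *ᵥ x = 0 → ∃ c, ∀ i, x i = c)
    {T : Set V} (hT : T.Nonempty) {x : V → ℝ} (hxT : ∀ v ∈ T, x v = 0)
    (hxF : ∀ v ∉ T, 0 ≤ (lapOf w *ᵥ x) v) (v : V) : 0 ≤ x v := by
  by_contra! hv
  obtain ⟨i, -, hmin⟩ := exists_min_image univ x ⟨v, mem_univ v⟩
  have hneg : x i < 0 := (hmin v (mem_univ v)).trans_lt hv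
  -- The set where `x` attains its negative minimum avoids `T` and is closed under adjacency.
  set S := {u | x u = x i}
  have hST : ∀ u ∈ S, u ∉ T := fun u hu huT => by
    simp only [S, Set.mem_ofPred_eq, hxT u huT] at hu; linarith
  have hS : ∀ a ∈ S, ∀ u, w a u ≠ 0 → u ∈ S := fun a ha u hau => by
    have ha' : x a = x i := ha
    exact (eq_of_isMin_of_lapOf_mulVec_nonneg hw_nonneg hw_diag
      (fun u => ha' ▸ hmin u (mem_univ u)) (hxF a (hST a ha)) hau).trans ha'
  obtain ⟨c, hc⟩ := hconn _ (lapOf_mulVec_indicator_eq_zero hw_sym hw_diag hS)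
  obtain ⟨t, ht⟩ := hT
  have hi : S.indicator 1 i = (1 : ℝ) := Set.indicator_of_mem (s := S) rfl 1
  have ht' : S.indicator 1 t = (0 : ℝ) := Set.indicator_of_notMem (fun h => hST t h ht) _
  linarith [hc i, hc t]

lemma lapOf_toBlock_compl_inv_nonneg (hw_sym : ∀ u v, w u v = w v u)
    (hw_nonneg : ∀ u v, 0 ≤ w u v) (hw_diag : ∀ u, w u u = 0)
    (hconn : ∀ x : V → ℝ, lapOf w *ᵥ x = 0 → ∃ c, ∀ i, x i = c)
    {T : Set V} [DecidablePred (· ∈ T)] (hT : T.Nonempty)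
    (hFF : IsUnit ((lapOf w).toBlock (¬ · ∈ T) (¬ · ∈ T))) (k l : {a // ¬ a ∈ T}) :
    0 ≤ ((lapOf w).toBlock (¬ · ∈ T) (¬ · ∈ T))⁻¹ k l := by
  set C := (lapOf w).toBlock (¬ · ∈ T) (¬ · ∈ T)
  -- Column `l` of `C⁻¹`, extended by zero to `T`, has Laplacian image `δ_l` off `T`.
  set x : V → ℝ := fun v => if h : v ∈ T then 0 else C⁻¹ ⟨v, h⟩ l
  have hxT : ∀ v ∈ T, x v = 0 := fun v hv => dif_pos hv
  have hxF : ∀ v ∉ T, 0 ≤ (lapOf w *ᵥ x) v := fun v hv => by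
    have hx0 : (fun j : {a // a ∈ T} => x j) = 0 := funext fun j => dif_pos j.2
    have hxC : (fun j : {a // ¬ a ∈ T} => x j) = fun j => C⁻¹ j l := funext fun j => dif_neg j.2
    rw [mulVec_apply_eq_toBlock_mulVec_add (lapOf w) (¬ · ∈ T) (· ∈ T) x ⟨v, hv⟩, hx0, hxC,
      mulVec_zero, Pi.zero_apply, zero_add]
    change 0 ≤ (C * C⁻¹) ⟨v, hv⟩ l
    rw [mul_nonsing_inv C ((isUnit_iff_isUnit_det C).mp hFF), one_apply]
    split_ifs <;> norm_num
  simpa [x, dif_neg k.2] using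
    nonneg_of_lapOf_mulVec_nonneg hw_sym hw_nonneg hw_diag hconn hT hxT hxF k

end Laplacian

theorem schur_is_laplacian_general {V : Type*} [Fintype V] [DecidableEq V]
    (w : V → V → ℝ) (hw_sym : ∀ u v, w u v = w v u)
    (hw_nonneg : ∀ u v, 0 ≤ w u v) (hw_diag : ∀ u, w u u = 0)
    (hconn : ∀ x : V → ℝ, (lapOf w).mulVec x = 0 → ∃ c, ∀ i, x i = c)
    (T : Set V) [DecidablePred (· ∈ T)]
    (hT : T.Nonempty)
    (hFF : IsUnit ((lapOf w).toBlock (¬ · ∈ T) (¬ · ∈ T))) :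
    ((schurOnto (lapOf w) T)ᵀ = schurOnto (lapOf w) T) ∧
    (∀ i, ∑ j, schurOnto (lapOf w) T i j = 0) ∧
    (∀ i j, i ≠ j → schurOnto (lapOf w) T i j ≤ 0) := by
  refine ⟨schurOnto_transpose (lapOf_isSymm hw_sym) T, fun i => ?_, fun i j hij => ?_⟩
  · simpa [mulVec, dotProduct] using
      congrFun (schurOnto_mulVec_eq_zero hFF (lapOf_mulVec_one hw_diag)) i
  · exact schurOnto_apply_nonpos_of_ne (fun u v => lapOf_apply_nonpos_of_ne hw_nonneg)
      (lapOf_toBlock_compl_inv_nonneg hw_sym hw_nonneg hw_diag hconn hT hFF) hij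

/-- The Schur complement of a connected weighted graph Laplacian onto a nonempty subset
`T` (with `F = V ∖ T` nonempty) is itself a graph Laplacian: symmetric, zero row sums,
and nonpositive off-diagonal entries. -/
theorem schur_is_laplacian {V : Type*} [Fintype V] [DecidableEq V]
    (w : V → V → ℝ) (hw_sym : ∀ u v, w u v = w v u)
    (hw_nonneg : ∀ u v, 0 ≤ w u v) (hw_diag : ∀ u, w u u = 0)
    (hconn : ∀ x : V → ℝ, (lapOf w).mulVec x = 0 → ∃ c, ∀ i, x i = c)
    (T : Set V) [DecidablePred (· ∈ T)]
    (hT : T.Nonempty) (hF : Tᶜ.Nonempty)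
    (hFF : IsUnit ((lapOf w).toBlock (¬ · ∈ T) (¬ · ∈ T))) :
    ((schurOnto (lapOf w) T)ᵀ = schurOnto (lapOf w) T) ∧
    (∀ i, ∑ j, schurOnto (lapOf w) T i j = 0) ∧
    (∀ i j, i ≠ j → schurOnto (lapOf w) T i j ≤ 0) :=
  schur_is_laplacian_general w hw_sym hw_nonneg hw_diag hconn T hT hFF
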